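/- arXiv:1710.08319 — 3 statements merged into one kernel-verified Lean document; each statement's English description precedes it below -/
import Mathlib

section
/- Let ξ, ω ∈ ℂ and define the 4×4 matrices W₀(ξ,ω), W₁(ξ,ω) by W₀(ξ,ω) = [[1,1,0,0],[0,0,0,0],[ξ,ξ,0,0],[0,0,0,0]], W₁(ξ,ω) = [[0,0,0,0],[0,0,ξ,1],[0,0,0,0],[0,0,1,ω]], set W'_s(ξ,ω) := W_s(ω,ξ), and let S = [[0,1,0,0],[1,0,0,0],[0,0,0,1],[0,0,1,0]]. Then the bulk cancellation relation of the Rule 54 matrix product ansatz holds: for all s, s', s'' ∈ ℤ₂, W_s S W_{χ(s,s',s'')} W'_{s''} = W_s W'_{s'} W_{s''} S (equivalently, P₁₂₃ 𝐖₁ S 𝐖₂ 𝐖'₃ = 𝐖₁ 𝐖'₂ 𝐖₃ S as operators on (ℂ²)^{⊗3} ⊗ ℂ⁴). -/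
/- STATEMENT 7: the bulk cancellation relation of the Rule 54 matrix product
ansatz, in componentwise form: for all s, s', s'' ∈ ℤ₂,
W_s S W_{χ(s,s',s'')} W'_{s''} = W_s W'_{s'} W_{s''} S. -/

noncomputable section

/-- The Rule 54 local update function `χ(w,n,e) = n + w + e + w·e (mod 2)`. -/
def chi (w n e : ZMod 2) : ZMod 2 := n + w + e + w * e

def W0 (ξ ω : ℂ) : Matrix (Fin 4) (Fin 4) ℂ :=
  !![1, 1, 0, 0;
     0, 0, 0, 0;
     ξ, ξ, 0, 0;
     0, 0, 0, 0]

def W1 (ξ ω : ℂ) : Matrix (Fin 4) (Fin 4) ℂ :=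
  !![0, 0, 0, 0;
     0, 0, ξ, 1;
     0, 0, 0, 0;
     0, 0, 1, ω]

/-- The ℤ₂-indexed family `𝐖 = (W₀, W₁)`. -/
def Wf (ξ ω : ℂ) : ZMod 2 → Matrix (Fin 4) (Fin 4) ℂ :=
  fun s => if s = 0 then W0 ξ ω else W1 ξ ω

/-- `𝐖'_s(ξ,ω) = 𝐖_s(ω,ξ)`. -/
def Wf' (ξ ω : ℂ) : ZMod 2 → Matrix (Fin 4) (Fin 4) ℂ := Wf ω ξ

def Smat : Matrix (Fin 4) (Fin 4) ℂ :=
  !![0, 1, 0, 0;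
     1, 0, 0, 0;
     0, 0, 0, 1;
     0, 0, 1, 0]

lemma key000 (ξ ω : ℂ) :
    W0 ξ ω * Smat * W0 ξ ω * W0 ω ξ = W0 ξ ω * W0 ω ξ * W0 ξ ω * Smat := by
  ext i j
  fin_cases i <;> fin_cases j <;>
      simp [W0, W1, Smat, Matrix.mul_apply, Fin.sum_univ_four] <;>
    (try simp [Matrix.vecHead, Matrix.vecTail]) <;> (try ring)

lemma key001 (ξ ω : ℂ) :
    W0 ξ ω * Smat * W1 ξ ω * W1 ω ξ = W0 ξ ω * W0 ω ξ * W1 ξ ω * Smat := by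
  ext i j
  fin_cases i <;> fin_cases j <;>
      simp [W0, W1, Smat, Matrix.mul_apply, Fin.sum_univ_four] <;>
    (try simp [Matrix.vecHead, Matrix.vecTail]) <;> (try ring)

lemma key010 (ξ ω : ℂ) :
    W0 ξ ω * Smat * W1 ξ ω * W0 ω ξ = W0 ξ ω * W1 ω ξ * W0 ξ ω * Smat := by
  ext i j
  fin_cases i <;> fin_cases j <;>
      simp [W0, W1, Smat, Matrix.mul_apply, Fin.sum_univ_four] <;>
    (try simp [Matrix.vecHead, Matrix.vecTail]) <;> (try ring)

lemma key011 (ξ ω : ℂ) :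
    W0 ξ ω * Smat * W0 ξ ω * W1 ω ξ = W0 ξ ω * W1 ω ξ * W1 ξ ω * Smat := by
  ext i j
  fin_cases i <;> fin_cases j <;>
      simp [W0, W1, Smat, Matrix.mul_apply, Fin.sum_univ_four] <;>
    (try simp [Matrix.vecHead, Matrix.vecTail]) <;> (try ring)

lemma key100 (ξ ω : ℂ) :
    W1 ξ ω * Smat * W1 ξ ω * W0 ω ξ = W1 ξ ω * W0 ω ξ * W0 ξ ω * Smat := by
  ext i j
  fin_cases i <;> fin_cases j <;>
      simp [W0, W1, Smat, Matrix.mul_apply, Fin.sum_univ_four] <;>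
    (try simp [Matrix.vecHead, Matrix.vecTail]) <;> (try ring)

lemma key101 (ξ ω : ℂ) :
    W1 ξ ω * Smat * W1 ξ ω * W1 ω ξ = W1 ξ ω * W0 ω ξ * W1 ξ ω * Smat := by
  ext i j
  fin_cases i <;> fin_cases j <;>
      simp [W0, W1, Smat, Matrix.mul_apply, Fin.sum_univ_four] <;>
    (try simp [Matrix.vecHead, Matrix.vecTail]) <;> (try ring)

lemma key110 (ξ ω : ℂ) :
    W1 ξ ω * Smat * W0 ξ ω * W0 ω ξ = W1 ξ ω * W1 ω ξ * W0 ξ ω * Smat := by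
  ext i j
  fin_cases i <;> fin_cases j <;>
      simp [W0, W1, Smat, Matrix.mul_apply, Fin.sum_univ_four] <;>
    (try simp [Matrix.vecHead, Matrix.vecTail]) <;> (try ring)

lemma key111 (ξ ω : ℂ) :
    W1 ξ ω * Smat * W0 ξ ω * W1 ω ξ = W1 ξ ω * W1 ω ξ * W1 ξ ω * Smat := by
  ext i j
  fin_cases i <;> fin_cases j <;>
      simp [W0, W1, Smat, Matrix.mul_apply, Fin.sum_univ_four] <;>
    (try simp [Matrix.vecHead, Matrix.vecTail]) <;> (try ring)

/-- Bulk cancellation relation `P₁₂₃ 𝐖₁ S 𝐖₂ 𝐖'₃ = 𝐖₁ 𝐖'₂ 𝐖₃ S`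
written componentwise. -/
theorem rule54_bulk_relation (ξ ω : ℂ) :
    ∀ s s' s'' : ZMod 2,
      Wf ξ ω s * Smat * Wf ξ ω (chi s s' s'') * Wf' ξ ω s''
        = Wf ξ ω s * Wf' ξ ω s' * Wf ξ ω s'' * Smat := by
  intro s s' s''
  fin_cases s <;> fin_cases s' <;> fin_cases s''
  · exact key000 ξ ω
  · exact key001 ξ ω
  · exact key010 ξ ω
  · exact key011 ξ ω
  · exact key100 ξ ω
  · exact key101 ξ ω
  · exact key110 ξ ω
  · exact key111 ξ ω

end
end

section
/- Let α, β, γ, δ, λ_L, λ_R ∈ ℂ with β ≠ 1, δ ≠ 1, λ_L ≠ 0, λ_R ≠ 0. Suppose the NESS boundary eigenvalue equations of the boundary-driven Rule 54 automaton hold: ((α + β − 1) − β λ_L) / ((β − 1) λ_L²) = λ_R (γ − λ_R) / (δ − 1) and λ_L (α − λ_L) / (β − 1) = ((γ + δ − 1) − δ λ_R) / ((δ − 1) λ_R²). Then λ := λ_L λ_R satisfies (λ − 1)·(λ³ + λ²(1 − αγ) + λ[βδ − (α + β − 1)(γ + δ − 1)] − (α + β − 1)(γ + δ − 1)) = 0.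 -/
/- STATEMENT 11: the NESS boundary eigenvalue equations of the boundary-driven
Rule 54 automaton imply the characteristic equation
(λ−1)(λ³ + λ²(1−αγ) + λ[βδ − (α+β−1)(γ+δ−1)] − (α+β−1)(γ+δ−1)) = 0
for λ = λ_L λ_R. -/

theorem rule54_NESS_orbital_eigenvalues
    (α β γ δ lamL lamR : ℂ)
    (hβ : β ≠ 1) (hδ : δ ≠ 1) (hL : lamL ≠ 0) (hR : lamR ≠ 0)
    (h1 : ((α + β - 1) - β * lamL) / ((β - 1) * lamL ^ 2)
            = lamR * (γ - lamR) / (δ - 1))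
    (h2 : lamL * (α - lamL) / (β - 1)
            = ((γ + δ - 1) - δ * lamR) / ((δ - 1) * lamR ^ 2)) :
    (lamL * lamR - 1) *
      ((lamL * lamR) ^ 3 + (lamL * lamR) ^ 2 * (1 - α * γ)
        + (lamL * lamR) * (β * δ - (α + β - 1) * (γ + δ - 1))
        - (α + β - 1) * (γ + δ - 1)) = 0 := by
  have hb : β - 1 ≠ 0 := sub_ne_zero.mpr hβ
  have hd : δ - 1 ≠ 0 := sub_ne_zero.mpr hδ
  field_simp at h1 h2
  apply mul_left_cancel₀ (mul_ne_zero hb hd)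
  rw [mul_zero]
  linear_combination ((-(δ - 1) * β - (β - 1) * γ * (lamL * lamR)) * lamL) * h2
    - (-(δ - 1) * (lamL * lamR) ^ 2 - (β - 1) * (γ + δ - 1)) * h1
end

section
/- (Holographic ergodicity.) Let χ : ℤ₂³ → ℤ₂ be a local rule that is reversible (χ(w, χ(w,n,e), e) = n for all w,n,e) and preserves the empty state (χ(0,0,0) = 0), let n be even, and let P^L, P^R be 4×4 stochastic matrices (nonnegative entries, each column summing to 1). Define the Markov propagator U = U_o U_e on probability vectors over ℤ₂ⁿ, with U_e = P₁₂₃ P₃₄₅ ⋯ P_{n−3,n−2,n−1} P^R_{n−1,n} and U_o = P^L₁₂ P₂₃₄ ⋯ P_{n−2,n−1,n}. Suppose: (i) both boundary cell states are accessible from any configuration, i.e., P^L_{(s,s'),(t,s')} > 0 and P^R_{(s',s),(s',t)} > 0 for all s, t, s' ∈ ℤ₂; (ii) the bulk deterministic dynamics is asymptotically abelian: for the automaton on the infinite lattice ℤ, for every finite A ⊂ ℤ, every initial configuration supported in A (i.e., s_{x,t} = 0 for all x ∉ A, t ∈ {0,1}), and every finite B ⊂ ℤ, there exists t* such that s_{x,t}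 = 0 for all x ∈ B and t > t*. Then U is irreducible (for every pair of configurations 𝐬, 𝐬' there exists t₀ ∈ ℕ with (U^{t₀})_{𝐬,𝐬'} > 0) and aperiodic (for some configuration 𝐬 the greatest common divisor of the return times t with (U^t)_{𝐬,𝐬} > 0 equals 1); i.e., the Markov chain is ergodic and mixing. -/
noncomputable section

/-- The bulk permutation matrix of a local rule `χ` acting on sites
`a, b, c` (= k, k+1, k+2): `(P v)_σ = v_{σ with middle cell updated by χ}`. -/
def P3mat {n : ℕ} (χ : ZMod 2 → ZMod 2 → ZMod 2 → ZMod 2) (a b c : Fin n) :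
    Matrix (Fin n → ZMod 2) (Fin n → ZMod 2) ℝ :=
  fun σ τ => if τ = Function.update σ b (χ (σ a) (σ b) (σ c)) then 1 else 0

/-- A two-site matrix `B` acting on sites `i, j` of the chain. -/
def P2mat {n : ℕ} (B : Matrix (ZMod 2 × ZMod 2) (ZMod 2 × ZMod 2) ℝ)
    (i j : Fin n) : Matrix (Fin n → ZMod 2) (Fin n → ZMod 2) ℝ :=
  fun σ τ =>
    (if ∀ k, k ≠ i → k ≠ j → σ k = τ k then 1 else 0) * B (σ i, σ j) (τ i, τ j)

/-- `⟨k % n, _⟩ : Fin n`. -/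
def fin' (n : ℕ) (hn : 0 < n) (k : ℕ) : Fin n := ⟨k % n, Nat.mod_lt _ hn⟩

/-- The even half-step propagator `U_e = P₁₂₃ P₃₄₅ ⋯ P_{n−3,n−2,n−1} P^R_{n−1,n}`. -/
def Ue (n : ℕ) (hn : 0 < n) (χ : ZMod 2 → ZMod 2 → ZMod 2 → ZMod 2)
    (PR : Matrix (ZMod 2 × ZMod 2) (ZMod 2 × ZMod 2) ℝ) :
    Matrix (Fin n → ZMod 2) (Fin n → ZMod 2) ℝ :=
  ((List.range ((n - 2) / 2)).map fun i =>
      P3mat χ (fin' n hn (2 * i)) (fin' n hn (2 * i + 1)) (fin' n hn (2 * i + 2))).prod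
    * P2mat PR (fin' n hn (n - 2)) (fin' n hn (n - 1))

/-- The odd half-step propagator `U_o = P^L₁₂ P₂₃₄ P₄₅₆ ⋯ P_{n−2,n−1,n}`. -/
def Uo (n : ℕ) (hn : 0 < n) (χ : ZMod 2 → ZMod 2 → ZMod 2 → ZMod 2)
    (PL : Matrix (ZMod 2 × ZMod 2) (ZMod 2 × ZMod 2) ℝ) :
    Matrix (Fin n → ZMod 2) (Fin n → ZMod 2) ℝ :=
  P2mat PL (fin' n hn 0) (fin' n hn 1) *
    ((List.range ((n - 2) / 2)).map fun i =>
      P3mat χ (fin' n hn (2 * i + 1)) (fin' n hn (2 * i + 2)) (fin' n hn (2 * i + 3))).prod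

/-- One even time layer of the deterministic bulk dynamics on the infinite
lattice ℤ (in the saw-configuration encoding): even cells are updated. -/
def stepE (χ : ZMod 2 → ZMod 2 → ZMod 2 → ZMod 2) (c : ℤ → ZMod 2) :
    ℤ → ZMod 2 :=
  fun x => if Even x then χ (c (x - 1)) (c x) (c (x + 1)) else c x

/-- One odd time layer: odd cells are updated. -/
def stepO (χ : ZMod 2 → ZMod 2 → ZMod 2 → ZMod 2) (c : ℤ → ZMod 2) :
    ℤ → ZMod 2 :=
  fun x => if ¬ Even x then χ (c (x - 1)) (c x) (c (x + 1)) else c x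

/-- One full time step of the deterministic bulk dynamics on ℤ. -/
def bulkStep (χ : ZMod 2 → ZMod 2 → ZMod 2 → ZMod 2) (c : ℤ → ZMod 2) :
    ℤ → ZMod 2 :=
  stepO χ (stepE χ c)

end

/-!
Every transition `τ ↦ chainStep τ (a, v)`, which resamples the right boundary cell to `v`, runs both
bulk sweeps and resamples the left boundary cell to `a`, has positive probability under `U`. The
bulk updates are involutions, so `(τ, a, v) ↦ (chainStep τ (a, v), τ₀, τₙ₋₁)` is a bijection of a
finite set and reachability along such transitions is symmetric. Placed in the lattice at the
sites `1, …, n`, and with the boundary cells resampled to the values the infinite lattice produces,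
the chain follows the bulk dynamics, which by asymptotic abelianness empties the window: every
configuration reaches the vacuum, hence, by symmetry, every configuration reaches every other.
The vacuum is a fixed point of the transition with `a = v = 0`, so `U₀₀ > 0` and `U` is
aperiodic.
-/

open Function Relation

namespace Matrix

variable {l m n R : Type*} [Fintype m] [Semiring R] [PartialOrder R] [IsOrderedRing R]

theorem mul_apply_nonneg {A : Matrix l m R} {B : Matrix m n R} (hA : ∀ i j, 0 ≤ A i j)
    (hB : ∀ i j, 0 ≤ B i j) (i : l) (j : n) : 0 ≤ (A * B) i j :=
  Finset.sum_nonneg fun k _ => mul_nonneg (hA i k) (hB k j)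

theorem mul_apply_pos [PosMulStrictMono R] {A : Matrix l m R} {B : Matrix m n R}
    (hA : ∀ i j, 0 ≤ A i j) (hB : ∀ i j, 0 ≤ B i j) {i : l} {j : n} (k : m) (hik : 0 < A i k)
    (hkj : 0 < B k j) : 0 < (A * B) i j :=
  (mul_pos hik hkj).trans_le <|
    Finset.single_le_sum (fun k' _ => mul_nonneg (hA i k') (hB k' j)) (Finset.mem_univ k)

theorem list_prod_apply_nonneg [DecidableEq m] {L : List (Matrix m m R)}
    (hL : ∀ M ∈ L, ∀ i j, 0 ≤ M i j) : ∀ i j, 0 ≤ L.prod i j := by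
  induction L with
  | nil => exact fun i j => by rw [List.prod_nil, one_apply]; split_ifs <;> simp
  | cons M L ih =>
    rw [List.prod_cons]
    exact mul_apply_nonneg (hL M (by simp)) (ih fun M' hM' => hL M' (by simp [hM']))

theorem list_prod_map_apply_foldr_pos [DecidableEq m] [PosMulStrictMono R] [Nontrivial R]
    {ι : Type*} {M : ι → Matrix m m R} {f : ι → m → m} (hM : ∀ k i j, 0 ≤ M k i j) {L : List ι}
    (hf : ∀ k ∈ L, ∀ j, 0 < M k (f k j) j) (j : m) : 0 < (L.map M).prod (L.foldr f j) j := by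
  induction L with
  | nil => simp
  | cons k L ih =>
    rw [List.map_cons, List.prod_cons, List.foldr_cons]
    refine mul_apply_pos (hM k) (list_prod_apply_nonneg fun _ hM' => ?_) _
      (hf k List.mem_cons_self _) (ih fun k' hk' => hf k' (List.mem_cons_of_mem k hk'))
    obtain ⟨k', -, rfl⟩ := List.mem_map.mp hM'
    exact hM k'

theorem exists_pow_apply_pos_of_reflTransGen [DecidableEq m] [PosMulStrictMono R] [Nontrivial R]
    {A : Matrix m m R} (hA : ∀ i j, 0 ≤ A i j) {i j : m}
    (h : ReflTransGen (fun i j => 0 < A i j) i j) : ∃ k, 0 < (A ^ k) i j := by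
  induction h with
  | refl => exact ⟨0, by simp⟩
  | tail _ hjk ih =>
    obtain ⟨k, hk⟩ := ih
    exact ⟨k + 1, pow_succ A k ▸ mul_apply_pos (pow_apply_nonneg hA k) hA _ hk hjk⟩

end Matrix

/-- The map `(x, b) ↦ (f x b, g x)` is a permutation of the finite set `α × β`, so the orbit of
`(x, b)` returns to `(x, b)`; its first coordinates lead from `f x b` back to `x`. -/
theorem Relation.ReflTransGen.symm_of_injective {α β : Type*} [Finite α] [Finite β]
    {f : α → β → α} {g : α → β} (hfg : Injective fun p : α × β => (f p.1 p.2, g p.1)) {x y : α}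
    (h : ReflTransGen (fun x y => ∃ b, y = f x b) x y) :
    ReflTransGen (fun x y => ∃ b, y = f x b) y x := by
  set F : α × β → α × β := fun p => (f p.1 p.2, g p.1)
  have back : ∀ x b, ReflTransGen (fun x y => ∃ b, y = f x b) (f x b) x := by
    intro x b
    obtain ⟨k, hk, hper⟩ := mem_periodicPts.mp (hfg.mem_periodicPts (x, b))
    have orbit : ∀ j, ReflTransGen (fun x y => ∃ b, y = f x b) (f x b) (F^[j + 1] (x, b)).1 := by
      intro j
      induction j with
      | zero => rfl
      | succ j ih => exact ih.tail ⟨_, by rw [iterate_succ_apply']⟩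
    simpa [Nat.sub_add_cancel hk, hper.eq] using orbit (k - 1)
  induction h with
  | refl => rfl
  | tail _ hyz ih =>
    obtain ⟨b, rfl⟩ := hyz
    exact (back _ b).trans ih

theorem Function.Injective.update_comp_update {ι γ : Type*} [DecidableEq ι] {i j : ι}
    (hij : i ≠ j) {B : (ι → γ) → ι → γ} (hB : Injective B) (hBi : ∀ x, B x i = x i) :
    Injective fun p : (ι → γ) × (γ × γ) =>
      (update (B (update p.1 j p.2.2)) i p.2.1, (p.1 i, p.1 j)) := by
  rintro ⟨x, a, v⟩ ⟨x', a', v'⟩ h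
  simp only [Prod.mk.injEq] at h
  obtain ⟨hout, hxi, hxj⟩ := h
  obtain rfl : a = a' := by simpa using congrFun hout i
  have hBeq : B (update x j v) = B (update x' j v') := by
    ext k
    by_cases hk : k = i
    · subst hk; rw [hBi, hBi, update_of_ne hij, update_of_ne hij, hxi]
    · simpa [update_of_ne hk] using congrFun hout k
  have hupd := hB hBeq
  obtain rfl : v = v' := by simpa using congrFun hupd j
  obtain rfl : x = x' := by
    ext k
    by_cases hk : k = j
    · subst hk; exact hxj
    · simpa [update_of_ne hk] using congrFun hupd k
  rfl

namespace HolographicChain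

variable {n : ℕ} (hn : 0 < n) (χ : ZMod 2 → ZMod 2 → ZMod 2 → ZMod 2)

theorem fin'_of_lt {k : ℕ} (hk : k < n) : fin' n hn k = ⟨k, hk⟩ :=
  Fin.ext (Nat.mod_eq_of_lt hk)

theorem val_fin' {k : ℕ} (hk : k < n) : (fin' n hn k : ℕ) = k := by
  rw [fin'_of_lt hn hk]

theorem fin'_ne_fin' {k l : ℕ} (hk : k < n) (hl : l < n) (hkl : k ≠ l) :
    fin' n hn k ≠ fin' n hn l := by
  simpa [fin'_of_lt hn hk, fin'_of_lt hn hl] using hkl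

theorem ne_fin' {k : Fin n} {l : ℕ} (hl : l < n) (hkl : (k : ℕ) ≠ l) : k ≠ fin' n hn l := by
  rintro rfl; exact hkl (val_fin' hn hl)

def localUpdate (a b c : Fin n) (τ : Fin n → ZMod 2) : Fin n → ZMod 2 :=
  update τ b (χ (τ a) (τ b) (τ c))

theorem localUpdate_involutive (hrev : ∀ w m e : ZMod 2, χ w (χ w m e) e = m) {a b c : Fin n}
    (hab : a ≠ b) (hcb : c ≠ b) : Involutive (localUpdate χ a b c) := by
  intro τ
  simp only [localUpdate, update_of_ne hab, update_of_ne hcb, update_self, hrev, update_idem,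
    update_eq_self]

theorem localUpdate_zero (hvac : χ 0 0 0 = 0) (a b c : Fin n) : localUpdate χ a b c 0 = 0 := by
  simp [localUpdate, hvac]

theorem P3mat_nonneg (a b c : Fin n) (σ τ : Fin n → ZMod 2) : 0 ≤ P3mat χ a b c σ τ := by
  unfold P3mat; split_ifs <;> norm_num

theorem P3mat_localUpdate_pos (hrev : ∀ w m e : ZMod 2, χ w (χ w m e) e = m) {a b c : Fin n}
    (hab : a ≠ b) (hcb : c ≠ b) (τ : Fin n → ZMod 2) :
    0 < P3mat χ a b c (localUpdate χ a b c τ) τ := by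
  have hinv : τ = localUpdate χ a b c (localUpdate χ a b c τ) :=
    (localUpdate_involutive χ hrev hab hcb τ).symm
  unfold P3mat
  split_ifs with h
  · exact one_pos
  · exact absurd hinv h

theorem list_prod_P3mat_nonneg (L : List ℕ) (a b c : ℕ → Fin n) (σ τ : Fin n → ZMod 2) :
    0 ≤ (L.map fun i => P3mat χ (a i) (b i) (c i)).prod σ τ := by
  classical
  refine Matrix.list_prod_apply_nonneg (fun M hM => ?_) σ τ
  obtain ⟨i, -, rfl⟩ := List.mem_map.mp hM
  exact P3mat_nonneg χ _ _ _

theorem list_prod_P3mat_foldr_pos (hrev : ∀ w m e : ZMod 2, χ w (χ w m e) e = m) {L : List ℕ}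
    {a b c : ℕ → Fin n} (h : ∀ i ∈ L, a i ≠ b i ∧ c i ≠ b i) (τ : Fin n → ZMod 2) :
    0 < (L.map fun i => P3mat χ (a i) (b i) (c i)).prod
      (L.foldr (fun i => localUpdate χ (a i) (b i) (c i)) τ) τ := by
  classical
  exact Matrix.list_prod_map_apply_foldr_pos (fun i => P3mat_nonneg χ _ _ _)
    (fun i hi => P3mat_localUpdate_pos χ hrev (h i hi).1 (h i hi).2) τ

theorem P2mat_nonneg {B : Matrix (ZMod 2 × ZMod 2) (ZMod 2 × ZMod 2) ℝ} (hB : ∀ p q, 0 ≤ B p q)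
    (i j : Fin n) (σ τ : Fin n → ZMod 2) : 0 ≤ P2mat B i j σ τ := by
  unfold P2mat; split_ifs <;> simp [hB]

theorem P2mat_update_left (B : Matrix (ZMod 2 × ZMod 2) (ZMod 2 × ZMod 2) ℝ) {i j : Fin n}
    (hij : i ≠ j) (τ : Fin n → ZMod 2) (a : ZMod 2) :
    P2mat B i j (update τ i a) τ = B (a, τ j) (τ i, τ j) := by
  rw [P2mat, if_pos fun k hki _ => update_of_ne hki .., update_self, update_of_ne hij.symm,
    one_mul]

theorem P2mat_update_right (B : Matrix (ZMod 2 × ZMod 2) (ZMod 2 × ZMod 2) ℝ) {i j : Fin n}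
    (hij : i ≠ j) (τ : Fin n → ZMod 2) (v : ZMod 2) :
    P2mat B i j (update τ j v) τ = B (τ i, v) (τ i, τ j) := by
  rw [P2mat, if_pos fun k _ hkj => update_of_ne hkj .., update_self, update_of_ne hij, one_mul]

/-- No centre `2 * i + o + 1` is a neighbour of another, so the order of these local updates does
not matter: `sweep` is the parallel update of the centres (`sweep_apply_center`). -/
def sweep (o m : ℕ) (τ : Fin n → ZMod 2) : Fin n → ZMod 2 :=
  (List.range m).foldr
    (fun i => localUpdate χ (fin' n hn (2 * i + o)) (fin' n hn (2 * i + o + 1))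
      (fin' n hn (2 * i + o + 2))) τ

theorem sweep_succ (o m : ℕ) (τ : Fin n → ZMod 2) :
    sweep hn χ o (m + 1) τ = sweep hn χ o m (localUpdate χ (fin' n hn (2 * m + o))
      (fin' n hn (2 * m + o + 1)) (fin' n hn (2 * m + o + 2)) τ) := by
  simp [sweep, List.range_succ]

theorem sweep_apply_of_ne {o m : ℕ} (hm : 2 * m + o < n) (τ : Fin n → ZMod 2) {k : Fin n}
    (hk : ∀ i < m, (k : ℕ) ≠ 2 * i + o + 1) : sweep hn χ o m τ k = τ k := by
  induction m generalizing τ with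
  | zero => rfl
  | succ m ih =>
    rw [sweep_succ, ih (by omega) _ fun i hi => hk i (by omega), localUpdate,
      update_of_ne (ne_fin' hn (by omega) (hk m (by omega)))]

theorem sweep_apply_center {o m : ℕ} (hm : 2 * m + o < n) (τ : Fin n → ZMod 2) {i k : ℕ}
    (hi : i < m) (hk : k = 2 * i + o) : sweep hn χ o m τ (fin' n hn (k + 1)) =
      χ (τ (fin' n hn k)) (τ (fin' n hn (k + 1))) (τ (fin' n hn (k + 2))) := by
  subst hk
  induction m generalizing τ with
  | zero => omega
  | succ m ih =>
    rw [sweep_succ]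
    obtain hi | rfl := Nat.lt_succ_iff_lt_or_eq.mp hi
    · simp only [ih (by omega) _ hi, localUpdate]
      rw [update_of_ne (fin'_ne_fin' hn (by omega) (by omega) (by omega)),
        update_of_ne (fin'_ne_fin' hn (by omega) (by omega) (by omega)),
        update_of_ne (fin'_ne_fin' hn (by omega) (by omega) (by omega))]
    · rw [sweep_apply_of_ne hn χ (by omega) _ fun j hj => by rw [val_fin' hn (by omega)]; omega,
        localUpdate, update_self]

theorem sweep_injective (hrev : ∀ w m e : ZMod 2, χ w (χ w m e) e = m) {o m : ℕ}
    (hm : 2 * m + o < n) : Injective (sweep hn χ o m) := by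
  induction m with
  | zero => exact injective_id
  | succ m ih =>
    simp only [funext (sweep_succ hn χ o m)]
    exact (ih (by omega)).comp (localUpdate_involutive χ hrev
      (fin'_ne_fin' hn (by omega) (by omega) (by omega))
      (fin'_ne_fin' hn (by omega) (by omega) (by omega))).injective

theorem sweep_zero (hvac : χ 0 0 0 = 0) (o m : ℕ) : sweep hn χ o m 0 = 0 := by
  induction m with
  | zero => rfl
  | succ m ih => rw [sweep_succ, localUpdate_zero χ hvac, ih]

def chainStep (τ : Fin n → ZMod 2) (b : ZMod 2 × ZMod 2) : Fin n → ZMod 2 :=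
  update (sweep hn χ 1 ((n - 2) / 2) (sweep hn χ 0 ((n - 2) / 2)
    (update τ (fin' n hn (n - 1)) b.2))) (fin' n hn 0) b.1

theorem chainStep_zero (hvac : χ 0 0 0 = 0) : chainStep hn χ 0 (0, 0) = 0 := by
  simp [chainStep, sweep_zero hn χ hvac]

theorem chainStep_injective (hne : Even n) (hrev : ∀ w m e : ZMod 2, χ w (χ w m e) e = m) :
    Injective fun p : (Fin n → ZMod 2) × (ZMod 2 × ZMod 2) =>
      (chainStep hn χ p.1 p.2, (p.1 (fin' n hn 0), p.1 (fin' n hn (n - 1)))) := by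
  obtain ⟨r, hr⟩ := hne
  refine (sweep_injective hn χ hrev (by omega)).comp (sweep_injective hn χ hrev (by omega))
    |>.update_comp_update (fin'_ne_fin' hn (by omega) (by omega) (by omega)) fun x => ?_
  have hfirst : ∀ i : ℕ, ((fin' n hn 0 : Fin n) : ℕ) ≠ 2 * i + 1 + 1 ∧
      ((fin' n hn 0 : Fin n) : ℕ) ≠ 2 * i + 0 + 1 := fun i => by
    rw [val_fin' hn hn]; omega
  simp only [comp_apply]
  rw [sweep_apply_of_ne hn χ (by omega) _ fun i _ => (hfirst i).1,
    sweep_apply_of_ne hn χ (by omega) _ fun i _ => (hfirst i).2]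

theorem Ue_nonneg {PR : Matrix (ZMod 2 × ZMod 2) (ZMod 2 × ZMod 2) ℝ} (hPR : ∀ p q, 0 ≤ PR p q) :
    ∀ σ τ, 0 ≤ Ue n hn χ PR σ τ :=
  Matrix.mul_apply_nonneg (list_prod_P3mat_nonneg χ _ _ _ _) (P2mat_nonneg hPR _ _)

theorem Uo_nonneg {PL : Matrix (ZMod 2 × ZMod 2) (ZMod 2 × ZMod 2) ℝ} (hPL : ∀ p q, 0 ≤ PL p q) :
    ∀ σ τ, 0 ≤ Uo n hn χ PL σ τ :=
  Matrix.mul_apply_nonneg (P2mat_nonneg hPL _ _) (list_prod_P3mat_nonneg χ _ _ _ _)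

theorem Ue_apply_pos (hne : Even n) (hrev : ∀ w m e : ZMod 2, χ w (χ w m e) e = m)
    {PR : Matrix (ZMod 2 × ZMod 2) (ZMod 2 × ZMod 2) ℝ} (hPR : ∀ p q, 0 ≤ PR p q)
    (hPRacc : ∀ s t s' : ZMod 2, 0 < PR (s', s) (s', t)) (τ : Fin n → ZMod 2) (v : ZMod 2) :
    0 < Ue n hn χ PR (sweep hn χ 0 ((n - 2) / 2) (update τ (fin' n hn (n - 1)) v)) τ := by
  obtain ⟨r, hr⟩ := hne
  refine Matrix.mul_apply_pos (list_prod_P3mat_nonneg χ _ _ _ _) (P2mat_nonneg hPR _ _)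
    (update τ (fin' n hn (n - 1)) v) (list_prod_P3mat_foldr_pos χ hrev (fun i hi => ?_) _) ?_
  · have := List.mem_range.mp hi
    exact ⟨fin'_ne_fin' hn (by omega) (by omega) (by omega),
      fin'_ne_fin' hn (by omega) (by omega) (by omega)⟩
  · rw [P2mat_update_right PR (fin'_ne_fin' hn (by omega) (by omega) (by omega))]
    exact hPRacc _ _ _

theorem Uo_apply_pos (hne : Even n) (hrev : ∀ w m e : ZMod 2, χ w (χ w m e) e = m)
    {PL : Matrix (ZMod 2 × ZMod 2) (ZMod 2 × ZMod 2) ℝ} (hPL : ∀ p q, 0 ≤ PL p q)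
    (hPLacc : ∀ s t s' : ZMod 2, 0 < PL (s, s') (t, s')) (τ : Fin n → ZMod 2) (a : ZMod 2) :
    0 < Uo n hn χ PL (update (sweep hn χ 1 ((n - 2) / 2) τ) (fin' n hn 0) a) τ := by
  obtain ⟨r, hr⟩ := hne
  refine Matrix.mul_apply_pos (P2mat_nonneg hPL _ _) (list_prod_P3mat_nonneg χ _ _ _ _)
    (sweep hn χ 1 ((n - 2) / 2) τ) ?_ (list_prod_P3mat_foldr_pos χ hrev (fun i hi => ?_) _)
  · rw [P2mat_update_left PL (fin'_ne_fin' hn (by omega) (by omega) (by omega))]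
    exact hPLacc _ _ _
  · have := List.mem_range.mp hi
    exact ⟨fin'_ne_fin' hn (by omega) (by omega) (by omega),
      fin'_ne_fin' hn (by omega) (by omega) (by omega)⟩

theorem U_apply_chainStep_pos (hne : Even n) (hrev : ∀ w m e : ZMod 2, χ w (χ w m e) e = m)
    {PL PR : Matrix (ZMod 2 × ZMod 2) (ZMod 2 × ZMod 2) ℝ} (hPL : ∀ p q, 0 ≤ PL p q)
    (hPR : ∀ p q, 0 ≤ PR p q) (hPLacc : ∀ s t s' : ZMod 2, 0 < PL (s, s') (t, s'))
    (hPRacc : ∀ s t s' : ZMod 2, 0 < PR (s', s) (s', t)) (τ : Fin n → ZMod 2)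
    (b : ZMod 2 × ZMod 2) : 0 < (Uo n hn χ PL * Ue n hn χ PR) (chainStep hn χ τ b) τ :=
  Matrix.mul_apply_pos (Uo_nonneg hn χ hPL) (Ue_nonneg hn χ hPR) _
    (Uo_apply_pos hn χ hne hrev hPL hPLacc _ b.1) (Ue_apply_pos hn χ hne hrev hPR hPRacc τ b.2)

/-- Cell `k` of the chain is the site `k + 1` of the lattice. -/
def window (c : ℤ → ZMod 2) : Fin n → ZMod 2 := fun k => c ((k : ℕ) + 1)

theorem window_fin' (c : ℤ → ZMod 2) {k : ℕ} (hk : k < n) :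
    window c (fin' n hn k) = c ((k : ℕ) + 1) := by
  rw [window, val_fin' hn hk]

theorem stepE_apply_of_even (c : ℤ → ZMod 2) {x : ℤ} (hx : Even x) :
    stepE χ c x = χ (c (x - 1)) (c x) (c (x + 1)) := if_pos hx

theorem stepE_apply_of_not_even (c : ℤ → ZMod 2) {x : ℤ} (hx : ¬Even x) : stepE χ c x = c x :=
  if_neg hx

theorem stepO_apply_of_not_even (c : ℤ → ZMod 2) {x : ℤ} (hx : ¬Even x) :
    stepO χ c x = χ (c (x - 1)) (c x) (c (x + 1)) := if_pos hx

theorem stepO_apply_of_even (c : ℤ → ZMod 2) {x : ℤ} (hx : Even x) : stepO χ c x = c x :=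
  if_neg (not_not_intro hx)

theorem sweep_window_eq_window_stepE (hne : Even n) (c : ℤ → ZMod 2) :
    sweep hn χ 0 ((n - 2) / 2) (update (window c) (fin' n hn (n - 1)) (stepE χ c n)) =
      window (stepE χ c) := by
  obtain ⟨r, hr⟩ := hne
  have hτ : ∀ l, l + 1 < n →
      update (window c) (fin' n hn (n - 1)) (stepE χ c n) (fin' n hn l) = c ((l : ℕ) + 1) :=
    fun l hl => by
      rw [update_of_ne (fin'_ne_fin' hn (by omega) (by omega) (by omega)),
        window_fin' hn _ (by omega)]
  ext ⟨k, hk⟩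
  rw [← fin'_of_lt hn hk, window_fin' hn _ hk]
  obtain ⟨j, rfl | rfl⟩ := Nat.even_or_odd' k
  · rw [sweep_apply_of_ne hn χ (by omega) _ fun i hi => by rw [val_fin' hn hk]; omega,
      hτ _ (by omega), stepE_apply_of_not_even χ c (by simp [parity_simps])]
  by_cases hlast : 2 * j + 1 = n - 1
  · rw [sweep_apply_of_ne hn χ (by omega) _ fun i hi => by rw [val_fin' hn hk]; omega, hlast,
      update_self]
    congr 1
    omega
  · rw [sweep_apply_center hn χ (by omega) _ (i := j) (k := 2 * j) (by omega) rfl, hτ _ (by omega),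
      hτ _ (by omega), hτ _ (by omega), stepE_apply_of_even χ c (by simp [parity_simps])]
    congr 2
    push_cast
    ring

theorem update_sweep_window_eq_window_stepO (hne : Even n) (c : ℤ → ZMod 2) :
    update (sweep hn χ 1 ((n - 2) / 2) (window c)) (fin' n hn 0) (stepO χ c 1) =
      window (stepO χ c) := by
  obtain ⟨r, hr⟩ := hne
  ext ⟨k, hk⟩
  rw [← fin'_of_lt hn hk, window_fin' hn _ hk]
  obtain rfl | hk0 := eq_or_ne k 0
  · simp
  rw [update_of_ne (fin'_ne_fin' hn hk hn hk0)]
  obtain ⟨j, rfl | rfl⟩ := Nat.even_or_odd' k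
  · obtain ⟨i, rfl⟩ := Nat.exists_eq_add_one_of_ne_zero (by omega : j ≠ 0)
    rw [stepO_apply_of_not_even χ c (by simp [parity_simps]),
      show 2 * (i + 1) = 2 * i + 1 + 1 by ring,
      sweep_apply_center hn χ (by omega) _ (i := i) (by omega) rfl, window_fin' hn _ (by omega),
      window_fin' hn _ (by omega), window_fin' hn _ (by omega)]
    congr 2
    push_cast
    ring
  · rw [sweep_apply_of_ne hn χ (by omega) _ fun i hi => by rw [val_fin' hn hk]; omega,
      window_fin' hn _ hk, stepO_apply_of_even χ c (by simp [parity_simps])]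

theorem chainStep_window (hne : Even n) (c : ℤ → ZMod 2) :
    chainStep hn χ (window c) (bulkStep χ c 1, stepE χ c n) = window (bulkStep χ c) := by
  rw [chainStep, sweep_window_eq_window_stepE hn χ hne]
  exact update_sweep_window_eq_window_stepO hn χ hne (stepE χ c)

theorem reflTransGen_chainStep_zero (hne : Even n)
    (habel : ∀ (A : Finset ℤ) (c : ℤ → ZMod 2), (∀ x : ℤ, x ∉ A → c x = 0) →
      ∀ B : Finset ℤ, ∃ tstar : ℕ, ∀ t : ℕ, tstar < t →
        ∀ x ∈ B, (bulkStep χ)^[t] c x = 0)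
    (τ : Fin n → ZMod 2) : ReflTransGen (fun x y => ∃ b, y = chainStep hn χ x b) τ 0 := by
  let c : ℤ → ZMod 2 := fun x => if 1 ≤ x ∧ x ≤ n then τ (fin' n hn (x.toNat - 1)) else 0
  have hc : window c = τ := by
    ext ⟨k, hk⟩
    simp only [window, c, if_pos (by omega : (1 : ℤ) ≤ k + 1 ∧ (k : ℤ) + 1 ≤ n)]
    rw [fin'_of_lt hn (by omega)]
    congr
  obtain ⟨T, hT⟩ := habel (Finset.Icc 1 n) c
    (fun x hx => if_neg fun h => hx (Finset.mem_Icc.mpr h)) (Finset.Icc 1 n)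
  have hchain : ∀ t, ReflTransGen (fun x y => ∃ b, y = chainStep hn χ x b)
      (window c) (window ((bulkStep χ)^[t] c)) := by
    intro t
    induction t with
    | zero => rfl
    | succ t ih =>
      exact ih.tail ⟨_, by rw [iterate_succ_apply', chainStep_window hn χ hne]⟩
  have hempty : window (n := n) ((bulkStep χ)^[T + 1] c) = 0 := by
    ext k
    exact hT (T + 1) T.lt_succ_self _ (Finset.mem_Icc.mpr ⟨by omega, by omega⟩)
  simpa only [hc, hempty] using hchain (T + 1)

end HolographicChain

open HolographicChain

/-- Holographic ergodicity. -/
theorem holographic_ergodicity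
    (χ : ZMod 2 → ZMod 2 → ZMod 2 → ZMod 2)
    (hrev : ∀ w n e : ZMod 2, χ w (χ w n e) e = n)
    (hvac : χ 0 0 0 = 0)
    (n : ℕ) (hn : 4 ≤ n) (hne : Even n)
    (PL PR : Matrix (ZMod 2 × ZMod 2) (ZMod 2 × ZMod 2) ℝ)
    -- P^L, P^R are stochastic matrices
    (hPLpos : ∀ p q, 0 ≤ PL p q)
    (hPRpos : ∀ p q, 0 ≤ PR p q)
    -- (i) both boundary cell states are accessible from any configuration
    (hacc : ∀ s t s' : ZMod 2, 0 < PL (s, s') (t, s') ∧ 0 < PR (s', s) (s', t))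
    -- (ii) the bulk deterministic dynamics is asymptotically abelian
    (habel : ∀ (A : Finset ℤ) (c : ℤ → ZMod 2), (∀ x : ℤ, x ∉ A → c x = 0) →
      ∀ B : Finset ℤ, ∃ tstar : ℕ, ∀ t : ℕ, tstar < t →
        ∀ x ∈ B, (bulkStep χ)^[t] c x = 0) :
    -- U is irreducible
    (∀ σ τ : Fin n → ZMod 2, ∃ t₀ : ℕ,
      0 < ((Uo n (by omega) χ PL * Ue n (by omega) χ PR) ^ t₀) σ τ) ∧
    -- U is aperiodic
    (∃ σ : Fin n → ZMod 2, ∀ d : ℕ,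
      (∀ t : ℕ, 0 < t →
        0 < ((Uo n (by omega) χ PL * Ue n (by omega) χ PR) ^ t) σ σ → d ∣ t) →
      d = 1) := by
  have hn0 : 0 < n := by omega
  have hU : ∀ σ τ, 0 ≤ (Uo n hn0 χ PL * Ue n hn0 χ PR) σ τ :=
    Matrix.mul_apply_nonneg (Uo_nonneg hn0 χ hPLpos) (Ue_nonneg hn0 χ hPRpos)
  have hstep : ∀ τ b, 0 < (Uo n hn0 χ PL * Ue n hn0 χ PR) (chainStep hn0 χ τ b) τ :=
    U_apply_chainStep_pos hn0 χ hne hrev hPLpos hPRpos (fun s t s' => (hacc s t s').1)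
      (fun s t s' => (hacc s t s').2)
  have hconn : ∀ σ τ, ReflTransGen (fun x y => ∃ b, y = chainStep hn0 χ x b) σ τ := fun σ τ =>
    (reflTransGen_chainStep_zero hn0 χ hne habel σ).trans
      ((reflTransGen_chainStep_zero hn0 χ hne habel τ).symm_of_injective
        (g := fun x => (x (fin' n hn0 0), x (fin' n hn0 (n - 1))))
        (chainStep_injective hn0 χ hne hrev))
  refine ⟨fun σ τ => Matrix.exists_pow_apply_pos_of_reflTransGen hU ?_,
    0, fun d hd => Nat.dvd_one.mp (hd 1 one_pos ?_)⟩
  · refine ReflTransGen.mono ?_ _ _ (reflTransGen_swap.mpr (hconn τ σ))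
    rintro x y ⟨b, rfl⟩
    exact hstep y b
  · simpa [chainStep_zero hn0 χ hvac] using hstep 0 (0, 0)
end
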